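/- Under the MIMO discrete-time adaptive law setup, the parameter estimates are uniformly bounded and the normalized estimation error is square-summable and uniformly bounded: sup_{t ∈ ℕ} ‖Θ(t)‖ < ∞, sup_{t ∈ ℕ} ‖Ψ(t)‖ < ∞, ∑_{t=0}^{∞} ‖ε(t)‖²/m(t)² < ∞, and sup_{t ∈ ℕ} ‖ε(t)‖/m(t) < ∞ (i.e. Θ ∈ L^∞, Ψ ∈ L^∞, and ε/m ∈ L² ∩ L^∞). -/

import Mathlib

/-!
The classical Lyapunov argument for gradient-type adaptive laws. With the parameter errors
`Θ̃ = Θ - Θ*` and `Ψ̃ = Ψ - K_p`, the error is `ε = K_p Θ̃ᵀ ζ + Ψ̃ ξ`, and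
`V = tr(Θ̃ S_p⁻ᵀ K_p Θ̃ᵀ) + tr(Ψ̃ᵀ Γ⁻¹ Ψ̃)` is a positive definite function of `(Θ̃, Ψ̃)`
because `S_p⁻ᵀ K_p = S_p⁻ᵀ (K_p S_p) S_p⁻¹` is congruent to `K_p S_p`. One step of the law gives
exactly `V(t+1) = V(t) - 2|ε|²/m² + (|ζ|² εᵀ K_p S_p ε + |ξ|² εᵀ Γ ε)/m⁴`, and since
`|ζ|² + |ξ|² ≤ m²` while `K_p S_p, Γ ≤ ρ I` for some `ρ < 2`, this is at most
`V(t) - (2 - ρ) |ε|²/m²`. So `V` decreases, which bounds `Θ` and `Ψ`, and telescoping bounds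
`∑ |ε|²/m²` by `V(0) / (2 - ρ)`.
-/

open Matrix

theorem exists_pos_mul_norm_sq_le_of_pos {E : Type*} [NormedAddCommGroup E] [NormedSpace ℝ E]
    [ProperSpace E] {Q : E → ℝ} (hQ : Continuous Q) (hhom : ∀ (a : ℝ) x, Q (a • x) = a ^ 2 * Q x)
    (hpos : ∀ x ≠ 0, 0 < Q x) : ∃ c > 0, ∀ x, c * ‖x‖ ^ 2 ≤ Q x := by
  rcases subsingleton_or_nontrivial E with hE | hE
  · refine ⟨1, one_pos, fun x => ?_⟩
    simpa [Subsingleton.elim x 0] using (hhom 0 0).ge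
  obtain ⟨x₀, hx₀, hmin⟩ := (isCompact_sphere (0 : E) 1).exists_isMinOn
    (NormedSpace.sphere_nonempty.2 zero_le_one) hQ.continuousOn
  have hx₀ : ‖x₀‖ = 1 := by simpa using hx₀
  refine ⟨Q x₀, hpos x₀ (norm_ne_zero_iff.1 (by simp [hx₀])), fun x => ?_⟩
  rcases eq_or_ne x 0 with rfl | hx
  · simpa using (hhom 0 0).ge
  have hxn : 0 < ‖x‖ := norm_pos_iff.2 hx
  have hsphere : ‖x‖⁻¹ • x ∈ Metric.sphere (0 : E) 1 := by
    simp [norm_smul, hxn.ne']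
  calc Q x₀ * ‖x‖ ^ 2 ≤ Q (‖x‖⁻¹ • x) * ‖x‖ ^ 2 := by gcongr; exact hmin hsphere
    _ = Q x := by rw [hhom]; field_simp

theorem summable_of_succ_add_mul_le {V f : ℕ → ℝ} {c : ℝ} (hc : 0 < c) (hV : ∀ t, 0 ≤ V t)
    (hf : ∀ t, 0 ≤ f t) (hdec : ∀ t, V (t + 1) + c * f t ≤ V t) : Summable f := by
  refine summable_of_sum_range_le (c := V 0 / c) hf fun n => (le_div_iff₀' hc).2 ?_
  calc c * ∑ t ∈ Finset.range n, f t ≤ ∑ t ∈ Finset.range n, (V t - V (t + 1)) := by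
        rw [Finset.mul_sum]
        exact Finset.sum_le_sum fun t _ => by linarith [hdec t]
    _ = V 0 - V n := Finset.sum_range_sub' V n
    _ ≤ V 0 := by linarith [hV n]

theorem exists_forall_sqrt_sum_sq_le {ι κ : Type*} [Fintype ι] [Fintype κ]
    {X : ℕ → Matrix ι κ ℝ} (X₀ : Matrix ι κ ℝ) {c C : ℝ} (hc : 0 < c)
    (h : ∀ t, c * ∑ i, ∑ j, (X t - X₀) i j ^ 2 ≤ C) :
    ∃ C' : ℝ, ∀ t, √(∑ i, ∑ j, X t i j ^ 2) ≤ C' := by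
  refine ⟨√(2 * (C / c) + 2 * ∑ i, ∑ j, X₀ i j ^ 2), fun t => Real.sqrt_le_sqrt ?_⟩
  calc ∑ i, ∑ j, X t i j ^ 2
      ≤ ∑ i, ∑ j, (2 * (X t - X₀) i j ^ 2 + 2 * X₀ i j ^ 2) := by
        gcongr with i _ j _
        rw [Matrix.sub_apply]
        nlinarith [sq_nonneg (X t i j - 2 * X₀ i j)]
    _ = 2 * ∑ i, ∑ j, (X t - X₀) i j ^ 2 + 2 * ∑ i, ∑ j, X₀ i j ^ 2 := by
        simp only [Finset.sum_add_distrib, Finset.mul_sum]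
    _ ≤ 2 * (C / c) + 2 * ∑ i, ∑ j, X₀ i j ^ 2 := by
        gcongr
        exact (le_div_iff₀' hc).2 (h t)

namespace Matrix

variable {ι n R : Type*} [Fintype ι] [Fintype n]

theorem dotProduct_self_nonneg [Ring R] [LinearOrder R] [IsStrictOrderedRing R] (v : n → R) :
    0 ≤ v ⬝ᵥ v :=
  Finset.sum_nonneg fun i _ => mul_self_nonneg (v i)

theorem exists_pos_mul_dotProduct_self_le {P : Matrix n n ℝ} (hP : ∀ x ≠ 0, 0 < x ⬝ᵥ P *ᵥ x) :
    ∃ c > 0, ∀ x, c * (x ⬝ᵥ x) ≤ x ⬝ᵥ P *ᵥ x := by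
  obtain ⟨c, hc, hle⟩ := exists_pos_mul_norm_sq_le_of_pos (E := EuclideanSpace ℝ n)
    (Q := fun y => y.ofLp ⬝ᵥ P *ᵥ y.ofLp) (by fun_prop)
    (fun a y => by
      simp only [WithLp.ofLp_smul, mulVec_smul, dotProduct_smul, smul_dotProduct, smul_eq_mul]
      ring)
    (fun y hy => hP _ (by simpa using hy))
  refine ⟨c, hc, fun x => ?_⟩
  have := hle (WithLp.toLp 2 x)
  rw [EuclideanSpace.real_norm_sq_eq] at this
  simpa only [dotProduct, sq] using this

theorem PosDef.exists_pos_mul_dotProduct_self_le {P : Matrix n n ℝ} (hP : P.PosDef) :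
    ∃ c > 0, ∀ x, c * (x ⬝ᵥ x) ≤ x ⬝ᵥ P *ᵥ x :=
  Matrix.exists_pos_mul_dotProduct_self_le fun x hx => by
    simpa using hP.dotProduct_mulVec_pos hx

theorem exists_lt_forall_dotProduct_mulVec_le [DecidableEq n] {P : Matrix n n ℝ} {b : ℝ}
    (hP : ∀ x ≠ 0, x ⬝ᵥ P *ᵥ x < b * (x ⬝ᵥ x)) :
    ∃ a < b, ∀ x, x ⬝ᵥ P *ᵥ x ≤ a * (x ⬝ᵥ x) := by
  have hmulVec (x : n → ℝ) : x ⬝ᵥ (b • 1 - P) *ᵥ x = b * (x ⬝ᵥ x) - x ⬝ᵥ P *ᵥ x := by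
    simp [sub_mulVec, smul_mulVec]
  obtain ⟨c, hc, hle⟩ := exists_pos_mul_dotProduct_self_le (P := b • 1 - P)
    fun x hx => by rw [hmulVec]; linarith [hP x hx]
  exact ⟨b - c, by linarith, fun x => by linarith [hle x, hmulVec x]⟩

theorem exists_mem_Ico_forall_dotProduct_mulVec_le [DecidableEq n] {P Q : Matrix n n ℝ} {b : ℝ}
    (hb : 0 < b) (hP : ∀ x ≠ 0, x ⬝ᵥ P *ᵥ x < b * (x ⬝ᵥ x))
    (hQ : ∀ x ≠ 0, x ⬝ᵥ Q *ᵥ x < b * (x ⬝ᵥ x)) :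
    ∃ a ∈ Set.Ico 0 b,
      (∀ x, x ⬝ᵥ P *ᵥ x ≤ a * (x ⬝ᵥ x)) ∧ ∀ x, x ⬝ᵥ Q *ᵥ x ≤ a * (x ⬝ᵥ x) := by
  obtain ⟨a₁, ha₁, hP'⟩ := exists_lt_forall_dotProduct_mulVec_le hP
  obtain ⟨a₂, ha₂, hQ'⟩ := exists_lt_forall_dotProduct_mulVec_le hQ
  refine ⟨max (max a₁ a₂) 0, ⟨le_max_right _ _, max_lt (max_lt ha₁ ha₂) hb⟩,
    fun x => (hP' x).trans ?_, fun x => (hQ' x).trans ?_⟩ <;>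
  exact mul_le_mul_of_nonneg_right (by simp) (dotProduct_self_nonneg x)

theorem IsSymm.dotProduct_mulVec_comm [CommSemiring R] {P : Matrix n n R} (hP : P.IsSymm)
    (x y : n → R) : x ⬝ᵥ P *ᵥ y = y ⬝ᵥ P *ᵥ x := by
  rw [dotProduct_mulVec, ← mulVec_transpose, hP.eq, dotProduct_comm]

section CommRing

variable [CommRing R]

/-- `tr (X P Xᵀ)`, the squared `P`-weighted Frobenius norm of `X`. -/
def weightedFrobeniusSq (P : Matrix n n R) (X : Matrix ι n R) : R := ∑ k, X k ⬝ᵥ P *ᵥ X k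

theorem mul_sum_sq_le_weightedFrobeniusSq [PartialOrder R] [IsOrderedRing R] {P : Matrix n n R}
    {c : R} (hc : ∀ x, c * (x ⬝ᵥ x) ≤ x ⬝ᵥ P *ᵥ x) (X : Matrix ι n R) :
    c * ∑ i, ∑ j, X i j ^ 2 ≤ weightedFrobeniusSq P X := by
  rw [Finset.mul_sum]
  exact Finset.sum_le_sum fun k _ => by simpa only [dotProduct, sq] using hc (X k)

theorem weightedFrobeniusSq_sub_vecMulVec {P A B : Matrix n n R} (hP : P.IsSymm)
    (hAP : Aᵀ * P = B) (X : Matrix ι n R) (w : ι → R) (e : n → R) :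
    weightedFrobeniusSq P (X - vecMulVec w (A *ᵥ e)) =
      weightedFrobeniusSq P X - 2 * (e ⬝ᵥ B *ᵥ (Xᵀ *ᵥ w)) + (w ⬝ᵥ w) * (e ⬝ᵥ (B * A) *ᵥ e) := by
  have hA (z : n → R) : (A *ᵥ e) ⬝ᵥ P *ᵥ z = e ⬝ᵥ B *ᵥ z := by
    rw [← hAP, ← mulVec_mulVec, dotProduct_mulVec e, ← mulVec_transpose, transpose_transpose]
  have hrow (k : ι) : (X - vecMulVec w (A *ᵥ e)) k ⬝ᵥ P *ᵥ (X - vecMulVec w (A *ᵥ e)) k =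
      X k ⬝ᵥ P *ᵥ X k - 2 * (w k * (e ⬝ᵥ B *ᵥ X k)) + w k * w k * (e ⬝ᵥ (B * A) *ᵥ e) := by
    have : (X - vecMulVec w (A *ᵥ e)) k = X k - w k • (A *ᵥ e) := by
      ext j; simp [vecMulVec_apply]
    rw [this, mulVec_sub, mulVec_smul, dotProduct_sub, sub_dotProduct, sub_dotProduct,
      dotProduct_smul, dotProduct_smul, smul_dotProduct, smul_dotProduct,
      hP.dotProduct_mulVec_comm (X k) (A *ᵥ e), hA, hA, ← mulVec_mulVec]
    simp only [smul_eq_mul]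
    ring
  have hcross : e ⬝ᵥ B *ᵥ (Xᵀ *ᵥ w) = ∑ k, w k * (e ⬝ᵥ B *ᵥ X k) := by
    simp only [mulVec_transpose, vecMul_eq_sum, mulVec_sum, dotProduct_sum, mulVec_smul,
      dotProduct_smul, smul_eq_mul]
  rw [weightedFrobeniusSq, Finset.sum_congr rfl fun k _ => hrow k, Finset.sum_add_distrib,
    Finset.sum_sub_distrib, weightedFrobeniusSq, hcross, Finset.mul_sum, ← Finset.sum_mul]
  rfl

end CommRing

end Matrix

section AdaptiveLaw

variable {ι κ : Type*} [Fintype ι] [Fintype κ] [DecidableEq κ]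

/-- The first weight equals `S_p⁻ᵀ K_p`; written as a congruence of `K_p S_p`, its symmetry and
positive definiteness are immediate. -/
noncomputable def adaptiveLyapunov (Kp Sp Γ : Matrix κ κ ℝ) (Θs Θ : Matrix ι κ ℝ)
    (Ψ : Matrix κ κ ℝ) : ℝ :=
  weightedFrobeniusSq (Sp⁻¹ᵀ * (Kp * Sp) * Sp⁻¹) (Θ - Θs) + weightedFrobeniusSq Γ⁻¹ (Ψ - Kp)ᵀ

theorem exists_pos_mul_le_adaptiveLyapunov {Kp Sp Γ : Matrix κ κ ℝ} (hSp : IsUnit Sp.det)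
    (hKS : (Kp * Sp).PosDef) (hΓ : Γ.PosDef) (Θs : Matrix ι κ ℝ) :
    ∃ c > 0, ∀ Θ Ψ, c * ∑ i, ∑ j, (Θ - Θs) i j ^ 2 ≤ adaptiveLyapunov Kp Sp Γ Θs Θ Ψ ∧
      c * ∑ i, ∑ j, (Ψ - Kp) i j ^ 2 ≤ adaptiveLyapunov Kp Sp Γ Θs Θ Ψ := by
  have hSpinv : IsUnit Sp⁻¹ := (isUnit_iff_isUnit_det _).2 (isUnit_nonsing_inv_det_iff.2 hSp)
  have hW : (Sp⁻¹ᵀ * (Kp * Sp) * Sp⁻¹).PosDef := by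
    simpa [conjTranspose_eq_transpose_of_trivial] using
      hKS.conjTranspose_mul_mul_same (mulVec_injective_of_isUnit hSpinv)
  obtain ⟨c₁, hc₁, hle₁⟩ := hW.exists_pos_mul_dotProduct_self_le
  obtain ⟨c₂, hc₂, hle₂⟩ := hΓ.inv.exists_pos_mul_dotProduct_self_le
  refine ⟨min c₁ c₂, lt_min hc₁ hc₂, fun Θ Ψ => ?_⟩
  have hΘ := mul_sum_sq_le_weightedFrobeniusSq hle₁ (Θ - Θs)
  have hΨ := mul_sum_sq_le_weightedFrobeniusSq hle₂ (Ψ - Kp)ᵀ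
  simp only [transpose_apply] at hΨ
  rw [Finset.sum_comm] at hΨ
  have hΘ0 : 0 ≤ ∑ i, ∑ j, (Θ - Θs) i j ^ 2 := by positivity
  have hΨ0 : 0 ≤ ∑ i, ∑ j, (Ψ - Kp) i j ^ 2 := by positivity
  have hΘc := mul_le_mul_of_nonneg_right (min_le_left c₁ c₂) hΘ0
  have hΨc := mul_le_mul_of_nonneg_right (min_le_right c₁ c₂) hΨ0
  constructor <;> unfold adaptiveLyapunov <;>
    linarith [mul_nonneg hc₁.le hΘ0, mul_nonneg hc₂.le hΨ0]

theorem adaptiveLyapunov_update {Kp Sp Γ : Matrix κ κ ℝ} (hSp : IsUnit Sp.det)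
    (hKS : (Kp * Sp).IsSymm) (hΓ : Γ.IsSymm) (hΓdet : IsUnit Γ.det)
    {Θs Θ Θ' : Matrix ι κ ℝ} {Ψ Ψ' : Matrix κ κ ℝ} {ζ : ι → ℝ} {ξ e : κ → ℝ} {μ : ℝ}
    (he : e = Kp *ᵥ ((Θ - Θs)ᵀ *ᵥ ζ) + (Ψ - Kp) *ᵥ ξ)
    (hΘ : Θ'ᵀ = Θᵀ - μ⁻¹ • vecMulVec (Sp *ᵥ e) ζ) (hΨ : Ψ' = Ψ - μ⁻¹ • vecMulVec (Γ *ᵥ e) ξ) :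
    adaptiveLyapunov Kp Sp Γ Θs Θ' Ψ' = adaptiveLyapunov Kp Sp Γ Θs Θ Ψ - 2 * μ⁻¹ * (e ⬝ᵥ e)
      + μ⁻¹ ^ 2 * ((ζ ⬝ᵥ ζ) * (e ⬝ᵥ (Kp * Sp) *ᵥ e) + (ξ ⬝ᵥ ξ) * (e ⬝ᵥ Γ *ᵥ e)) := by
  have hΘ' : Θ' - Θs = Θ - Θs - vecMulVec (μ⁻¹ • ζ) (Sp *ᵥ e) := by
    rw [← transpose_transpose Θ', hΘ]
    simp only [transpose_sub, transpose_smul, transpose_transpose, transpose_vecMulVec,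
      smul_vecMulVec]
    abel
  have hΨ' : (Ψ' - Kp)ᵀ = (Ψ - Kp)ᵀ - vecMulVec (μ⁻¹ • ξ) (Γ *ᵥ e) := by
    rw [hΨ]
    simp only [transpose_sub, transpose_smul, transpose_vecMulVec, smul_vecMulVec]
    abel
  have hW : (Sp⁻¹ᵀ * (Kp * Sp) * Sp⁻¹).IsSymm := by
    rw [IsSymm, transpose_mul, transpose_mul, hKS.eq, transpose_transpose]
    simp only [Matrix.mul_assoc]
  have hSpW : Spᵀ * (Sp⁻¹ᵀ * (Kp * Sp) * Sp⁻¹) = Kp := by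
    rw [← Matrix.mul_assoc, ← Matrix.mul_assoc, ← transpose_mul, nonsing_inv_mul _ hSp,
      transpose_one, Matrix.one_mul, Matrix.mul_assoc, mul_nonsing_inv _ hSp, Matrix.mul_one]
  have hΓΓ : Γᵀ * Γ⁻¹ = 1 := by rw [hΓ.eq, mul_nonsing_inv _ hΓdet]
  rw [adaptiveLyapunov, adaptiveLyapunov, hΘ', hΨ', weightedFrobeniusSq_sub_vecMulVec hW hSpW,
    weightedFrobeniusSq_sub_vecMulVec hΓ.inv hΓΓ]
  have hee : e ⬝ᵥ e = e ⬝ᵥ Kp *ᵥ ((Θ - Θs)ᵀ *ᵥ ζ) + e ⬝ᵥ (Ψ - Kp) *ᵥ ξ := by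
    rw [← dotProduct_add, ← he]
  simp only [mulVec_smul, dotProduct_smul, smul_dotProduct, smul_eq_mul, one_mulVec,
    Matrix.one_mul, transpose_transpose]
  linear_combination 2 * μ⁻¹ * hee

theorem adaptiveLyapunov_update_add_le {Kp Sp Γ : Matrix κ κ ℝ} (hSp : IsUnit Sp.det)
    (hKS : (Kp * Sp).IsSymm) (hΓ : Γ.IsSymm) (hΓdet : IsUnit Γ.det) {ρ : ℝ} (hρ : 0 ≤ ρ)
    (hKSρ : ∀ x, x ⬝ᵥ (Kp * Sp) *ᵥ x ≤ ρ * (x ⬝ᵥ x)) (hΓρ : ∀ x, x ⬝ᵥ Γ *ᵥ x ≤ ρ * (x ⬝ᵥ x))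
    {Θs Θ Θ' : Matrix ι κ ℝ} {Ψ Ψ' : Matrix κ κ ℝ} {ζ : ι → ℝ} {ξ e : κ → ℝ} {μ : ℝ}
    (hμ : μ = 1 + ζ ⬝ᵥ ζ + ξ ⬝ᵥ ξ) (he : e = Kp *ᵥ ((Θ - Θs)ᵀ *ᵥ ζ) + (Ψ - Kp) *ᵥ ξ)
    (hΘ : Θ'ᵀ = Θᵀ - μ⁻¹ • vecMulVec (Sp *ᵥ e) ζ) (hΨ : Ψ' = Ψ - μ⁻¹ • vecMulVec (Γ *ᵥ e) ξ) :
    adaptiveLyapunov Kp Sp Γ Θs Θ' Ψ' + (2 - ρ) * (e ⬝ᵥ e / μ) ≤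
      adaptiveLyapunov Kp Sp Γ Θs Θ Ψ := by
  rw [adaptiveLyapunov_update hSp hKS hΓ hΓdet he hΘ hΨ]
  have hζ := dotProduct_self_nonneg ζ
  have hξ := dotProduct_self_nonneg ξ
  have hρe : 0 ≤ ρ * (e ⬝ᵥ e) := mul_nonneg hρ (dotProduct_self_nonneg e)
  have hμ0 : 0 < μ := by rw [hμ]; positivity
  have hquad : (ζ ⬝ᵥ ζ) * (e ⬝ᵥ (Kp * Sp) *ᵥ e) + (ξ ⬝ᵥ ξ) * (e ⬝ᵥ Γ *ᵥ e) ≤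
      μ * (ρ * (e ⬝ᵥ e)) := by
    nlinarith [mul_le_mul_of_nonneg_left (hKSρ e) hζ, mul_le_mul_of_nonneg_left (hΓρ e) hξ]
  have : μ⁻¹ ^ 2 * ((ζ ⬝ᵥ ζ) * (e ⬝ᵥ (Kp * Sp) *ᵥ e) + (ξ ⬝ᵥ ξ) * (e ⬝ᵥ Γ *ᵥ e)) ≤
      μ⁻¹ * (ρ * (e ⬝ᵥ e)) :=
    calc _ ≤ μ⁻¹ ^ 2 * (μ * (ρ * (e ⬝ᵥ e))) := by gcongr
      _ = μ⁻¹ * (ρ * (e ⬝ᵥ e)) := by field_simp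
  rw [div_eq_mul_inv]
  linarith

end AdaptiveLaw

theorem mimo_discrete_adaptive_law_boundedness_and_L2_general
    (N M : ℕ)
    (ζ : ℕ → Fin N → ℝ) (ξ : ℕ → Fin M → ℝ)
    (m : ℕ → ℝ)
    (hm : ∀ t, m t = Real.sqrt (1 + (∑ i, ζ t i * ζ t i) + ∑ j, ξ t j * ξ t j))
    (Kp Sp : Matrix (Fin M) (Fin M) ℝ) (hSp : IsUnit Sp.det)
    (hKS : (Kp * Sp).PosDef)
    (hKS2 : ∀ x : Fin M → ℝ, x ≠ 0 →
      (∑ i, x i * ((Kp * Sp).mulVec x) i) < 2 * ∑ i, x i * x i)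
    (Γ : Matrix (Fin M) (Fin M) ℝ) (hΓ : Γ.PosDef)
    (hΓ2 : ∀ x : Fin M → ℝ, x ≠ 0 →
      (∑ i, x i * (Γ.mulVec x) i) < 2 * ∑ i, x i * x i)
    (Θs : Matrix (Fin N) (Fin M) ℝ)
    (Θ : ℕ → Matrix (Fin N) (Fin M) ℝ) (Ψ : ℕ → Matrix (Fin M) (Fin M) ℝ)
    (ε : ℕ → Fin M → ℝ)
    (hε : ∀ t, ε t = Kp.mulVec ((Θ t - Θs)ᵀ.mulVec (ζ t)) + (Ψ t - Kp).mulVec (ξ t))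
    (hΘlaw : ∀ t, (Θ (t + 1))ᵀ =
      (Θ t)ᵀ - (m t ^ 2)⁻¹ • Matrix.vecMulVec (Sp.mulVec (ε t)) (ζ t))
    (hΨlaw : ∀ t, Ψ (t + 1) =
      Ψ t - (m t ^ 2)⁻¹ • Matrix.vecMulVec (Γ.mulVec (ε t)) (ξ t)) :
    (∃ C : ℝ, ∀ t, Real.sqrt (∑ i, ∑ j, (Θ t i j) ^ 2) ≤ C) ∧
    (∃ C : ℝ, ∀ t, Real.sqrt (∑ i, ∑ j, (Ψ t i j) ^ 2) ≤ C) ∧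
    Summable (fun t => (∑ j, ε t j * ε t j) / m t ^ 2) ∧
    (∃ C : ℝ, ∀ t, Real.sqrt (∑ j, ε t j * ε t j) / m t ≤ C) := by
  have hμ (t : ℕ) : m t ^ 2 = 1 + ζ t ⬝ᵥ ζ t + ξ t ⬝ᵥ ξ t := by
    rw [hm t]
    exact Real.sq_sqrt (add_nonneg (add_nonneg zero_le_one (dotProduct_self_nonneg (ζ t)))
      (dotProduct_self_nonneg (ξ t)))
  obtain ⟨ρ, ⟨hρ0, hρ2⟩, hKSρ, hΓρ⟩ := exists_mem_Ico_forall_dotProduct_mulVec_le two_pos hKS2 hΓ2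
  set V : ℕ → ℝ := fun t => adaptiveLyapunov Kp Sp Γ Θs (Θ t) (Ψ t)
  set f : ℕ → ℝ := fun t => (∑ j, ε t j * ε t j) / m t ^ 2
  have hf (t : ℕ) : 0 ≤ f t := div_nonneg (dotProduct_self_nonneg (ε t)) (sq_nonneg _)
  have hdec (t : ℕ) : V (t + 1) + (2 - ρ) * f t ≤ V t :=
    adaptiveLyapunov_update_add_le hSp (isHermitian_iff_isSymm.1 hKS.1)
      (isHermitian_iff_isSymm.1 hΓ.1) ((isUnit_iff_isUnit_det Γ).1 hΓ.isUnit) hρ0 hKSρ hΓρ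
      (hμ t) (hε t) (hΘlaw t) (hΨlaw t)
  obtain ⟨c, hc, hlow⟩ := exists_pos_mul_le_adaptiveLyapunov hSp hKS hΓ Θs
  have hV (t : ℕ) : 0 ≤ V t := (by positivity : 0 ≤ c * _).trans (hlow (Θ t) (Ψ t)).1
  have hVle (t : ℕ) : V t ≤ V 0 :=
    antitone_nat_of_succ_le (fun t => by nlinarith [hdec t, hf t]) (Nat.zero_le t)
  have hsum : Summable f := summable_of_succ_add_mul_le (by linarith) hV hf hdec
  refine ⟨exists_forall_sqrt_sum_sq_le Θs hc fun t => (hlow _ _).1.trans (hVle t),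
    exists_forall_sqrt_sum_sq_le Kp hc fun t => (hlow _ _).2.trans (hVle t), hsum,
    ⟨√(∑' t, f t), fun t => ?_⟩⟩
  calc √(∑ j, ε t j * ε t j) / m t = √(f t) := by
        rw [Real.sqrt_div' _ (sq_nonneg _), Real.sqrt_sq (hm t ▸ Real.sqrt_nonneg _)]
    _ ≤ √(∑' t, f t) := Real.sqrt_le_sqrt (hsum.le_tsum t fun j _ => hf j)

/-- MIMO discrete-time adaptive laws (Lemma 3.1, discrete-time case):
`Θ` and `Ψ` are uniformly bounded (Frobenius norm), and the normalized
estimation error `ε/m` is square-summable and uniformly bounded. -/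
theorem mimo_discrete_adaptive_law_boundedness_and_L2
    (N M : ℕ) (hN : 0 < N) (hM : 0 < M)
    (ζ : ℕ → Fin N → ℝ) (ξ : ℕ → Fin M → ℝ)
    (m : ℕ → ℝ)
    (hm : ∀ t, m t = Real.sqrt (1 + (∑ i, ζ t i * ζ t i) + ∑ j, ξ t j * ξ t j))
    (Kp Sp : Matrix (Fin M) (Fin M) ℝ) (hSp : IsUnit Sp.det)
    (hKS : (Kp * Sp).PosDef)
    (hKS2 : ∀ x : Fin M → ℝ, x ≠ 0 →
      (∑ i, x i * ((Kp * Sp).mulVec x) i) < 2 * ∑ i, x i * x i)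
    (Γ : Matrix (Fin M) (Fin M) ℝ) (hΓ : Γ.PosDef)
    (hΓ2 : ∀ x : Fin M → ℝ, x ≠ 0 →
      (∑ i, x i * (Γ.mulVec x) i) < 2 * ∑ i, x i * x i)
    (Θs : Matrix (Fin N) (Fin M) ℝ)
    (Θ : ℕ → Matrix (Fin N) (Fin M) ℝ) (Ψ : ℕ → Matrix (Fin M) (Fin M) ℝ)
    (ε : ℕ → Fin M → ℝ)
    (hε : ∀ t, ε t = Kp.mulVec ((Θ t - Θs)ᵀ.mulVec (ζ t)) + (Ψ t - Kp).mulVec (ξ t))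
    (hΘlaw : ∀ t, (Θ (t + 1))ᵀ =
      (Θ t)ᵀ - (m t ^ 2)⁻¹ • Matrix.vecMulVec (Sp.mulVec (ε t)) (ζ t))
    (hΨlaw : ∀ t, Ψ (t + 1) =
      Ψ t - (m t ^ 2)⁻¹ • Matrix.vecMulVec (Γ.mulVec (ε t)) (ξ t)) :
    (∃ C : ℝ, ∀ t, Real.sqrt (∑ i, ∑ j, (Θ t i j) ^ 2) ≤ C) ∧
    (∃ C : ℝ, ∀ t, Real.sqrt (∑ i, ∑ j, (Ψ t i j) ^ 2) ≤ C) ∧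
    Summable (fun t => (∑ j, ε t j * ε t j) / m t ^ 2) ∧
    (∃ C : ℝ, ∀ t, Real.sqrt (∑ j, ε t j * ε t j) / m t ≤ C) :=
  mimo_discrete_adaptive_law_boundedness_and_L2_general N M ζ ξ m hm Kp Sp hSp hKS hKS2 Γ hΓ hΓ2 Θs
    Θ Ψ ε hε hΘlaw hΨlaw
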